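/- arXiv:quant-ph/0508153 — 8 statements merged into one kernel-verified Lean document; each statement's English description precedes it below -/
import Mathlib

section
/- Let u, v, w be three unit vectors in a real inner product space. Then √(1 − ⟨u,v⟩²) + √(1 − ⟨v,w⟩²) ≥ √(1 − ⟨u,w⟩²). (In words: the sum of the absolute values of the sines of any two inter-angles of three unit vectors is at least the absolute value of the sine of the third inter-angle.) -/
/-!
For unit vectors `a, b`, `√(1 - ⟪a, b⟫²)` is the distance from `a` to the line `ℝ b`, attained at
`⟪a, b⟫ • b`. So `√(1 - ⟪u, w⟫²) ≤ ‖u - (⟪u, v⟫ * ⟪v, w⟫) • w‖`, and writing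
`u - (⟪u, v⟫ * ⟪v, w⟫) • w = (u - ⟪u, v⟫ • v) + ⟪u, v⟫ • (v - ⟪v, w⟫ • w)`, the triangle
inequality and `|⟪u, v⟫| ≤ 1` bound this by the sum of the other two sines.
-/

open RealInnerProductSpace

section

variable {E : Type*} [NormedAddCommGroup E] [InnerProductSpace ℝ E]

theorem norm_sub_smul_sq_of_norm_eq_one {w : E} (hw : ‖w‖ = 1) (u : E) (t : ℝ) :
    ‖u - t • w‖ ^ 2 = ‖u‖ ^ 2 - ⟪u, w⟫ ^ 2 + (t - ⟪u, w⟫) ^ 2 := by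
  rw [norm_sub_sq_real, norm_smul, real_inner_smul_right, hw, mul_one, Real.norm_eq_abs, sq_abs]
  ring

theorem norm_sub_inner_smul_of_norm_eq_one {w : E} (hw : ‖w‖ = 1) (u : E) :
    ‖u - ⟪u, w⟫ • w‖ = √(‖u‖ ^ 2 - ⟪u, w⟫ ^ 2) := by
  have h := norm_sub_smul_sq_of_norm_eq_one hw u ⟪u, w⟫
  rw [sub_self, zero_pow two_ne_zero, add_zero] at h
  rw [← h, Real.sqrt_sq (norm_nonneg _)]

theorem sqrt_norm_sq_sub_inner_sq_le {w : E} (hw : ‖w‖ = 1) (u : E) (t : ℝ) :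
    √(‖u‖ ^ 2 - ⟪u, w⟫ ^ 2) ≤ ‖u - t • w‖ := by
  rw [← Real.sqrt_sq (norm_nonneg (u - t • w)), norm_sub_smul_sq_of_norm_eq_one hw]
  exact Real.sqrt_le_sqrt (le_add_of_nonneg_right (sq_nonneg _))

end

/-- Lemma 2 of the paper (spherical triangle inequality for sines): for three
unit vectors `u, v, w` in a real inner product space, the sum of the sines of
two of the inter-angles dominates the sine of the third, where for unit vectors
`a, b` the absolute value of the sine of their inter-angle is `√(1 - ⟪a,b⟫²)`. -/
theorem sineTriangleReal {E : Type*} [NormedAddCommGroup E] [InnerProductSpace ℝ E]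
    (u v w : E) (hu : ‖u‖ = 1) (hv : ‖v‖ = 1) (hw : ‖w‖ = 1) :
    Real.sqrt (1 - (inner ℝ u v : ℝ) ^ 2) + Real.sqrt (1 - (inner ℝ v w : ℝ) ^ 2) ≥
      Real.sqrt (1 - (inner ℝ u w : ℝ) ^ 2) := by
  set a := ⟪u, v⟫
  set b := ⟪v, w⟫
  have ha : |a| ≤ 1 := by simpa [hu, hv] using abs_real_inner_le_norm u v
  calc √(1 - ⟪u, w⟫ ^ 2) ≤ ‖u - (a * b) • w‖ := by
        simpa [hu] using sqrt_norm_sq_sub_inner_sq_le hw u (a * b)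
    _ = ‖(u - a • v) + a • (v - b • w)‖ := by rw [smul_sub, mul_smul]; abel_nf
    _ ≤ ‖u - a • v‖ + |a| * ‖v - b • w‖ := by
        simpa only [norm_smul, Real.norm_eq_abs] using norm_add_le (u - a • v) (a • (v - b • w))
    _ ≤ ‖u - a • v‖ + ‖v - b • w‖ := by gcongr; exact mul_le_of_le_one_left (norm_nonneg _) ha
    _ = √(1 - a ^ 2) + √(1 - b ^ 2) := by
        rw [norm_sub_inner_smul_of_norm_eq_one hv, norm_sub_inner_smul_of_norm_eq_one hw, hu, hv,
          one_pow]
end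

section
/- Let a, b, c, d, e be real numbers with a² + b² = 1, c² + d² + e² = 1, and b ≥ 0. Then b + √(1 − c²) ≥ √(1 − (a·c + b·d)²). -/
/-!
Both sides are sines of angles between unit vectors. By Lagrange's identity the square of the
right-hand side is `(a d - b c)² + e²`, and `|a d - b c| ≤ |d| + b` since `|a|, |c| ≤ 1`; the
claim then follows from the triangle inequality for the plane vectors `(b, 0)` and `(|d|, e)`,
the latter having length `√(d² + e²) = √(1 - c²)`.
-/

lemma abs_mul_sub_mul_le_abs_add_abs {a b c d : ℝ} (ha : |a| ≤ 1) (hc : |c| ≤ 1) :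
    |a * d - b * c| ≤ |d| + |b| :=
  calc |a * d - b * c| ≤ |a * d| + |b * c| := abs_sub _ _
    _ = |a| * |d| + |b| * |c| := by rw [abs_mul, abs_mul]
    _ ≤ |d| + |b| := add_le_add (mul_le_of_le_one_left (abs_nonneg d) ha)
        (mul_le_of_le_one_right (abs_nonneg b) hc)

lemma sqrt_add_sq_add_sq_le_add_sqrt {p q e : ℝ} (hq : 0 ≤ q) :
    √((p + q) ^ 2 + e ^ 2) ≤ q + √(p ^ 2 + e ^ 2) := by
  have hr : 0 ≤ p ^ 2 + e ^ 2 := by positivity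
  have hp : p ≤ √(p ^ 2 + e ^ 2) :=
    (le_abs_self p).trans (Real.abs_le_sqrt (le_add_of_nonneg_right (sq_nonneg e)))
  rw [Real.sqrt_le_left (by positivity)]
  nlinarith [Real.sq_sqrt hr, mul_le_mul_of_nonneg_left hp hq]

/-- Coordinate form of the spherical-triangle sine inequality for the unit
vectors `(1,0,0)`, `(a,b,0)`, `(c,d,e)` in ℝ³ (inequality (11) of the paper). -/
theorem sineTriangleCoord (a b c d e : ℝ) (hab : a ^ 2 + b ^ 2 = 1)
    (hcde : c ^ 2 + d ^ 2 + e ^ 2 = 1) (hb : 0 ≤ b) :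
    b + Real.sqrt (1 - c ^ 2) ≥ Real.sqrt (1 - (a * c + b * d) ^ 2) := by
  have ha : |a| ≤ 1 := (sq_le_one_iff_abs_le_one a).1 (by nlinarith)
  have hc : |c| ≤ 1 := (sq_le_one_iff_abs_le_one c).1 (by nlinarith)
  have hcross : |a * d - b * c| ≤ |d| + b := by
    simpa only [abs_of_nonneg hb] using abs_mul_sub_mul_le_abs_add_abs (b := b) (d := d) ha hc
  have hlagrange : 1 - (a * c + b * d) ^ 2 = (a * d - b * c) ^ 2 + e ^ 2 := by
    linear_combination -(c ^ 2 + d ^ 2) * hab - hcde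
  calc √(1 - (a * c + b * d) ^ 2) = √((a * d - b * c) ^ 2 + e ^ 2) := by rw [hlagrange]
    _ ≤ √((|d| + b) ^ 2 + e ^ 2) :=
        Real.sqrt_le_sqrt (add_le_add_left (sq_le_sq.2 (hcross.trans (le_abs_self _))) _)
    _ ≤ b + √(|d| ^ 2 + e ^ 2) := sqrt_add_sq_add_sq_le_add_sqrt hb
    _ = b + √(1 - c ^ 2) := by rw [sq_abs]; congr 2; linarith
end

section
/- Let u, v, w be three unit vectors in a complex inner product space. Then √(1 − |⟨u,v⟩|²) + √(1 − |⟨v,w⟩|²) ≥ √(1 − |⟨u,w⟩|²). -/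
/-!
The sine of the angle between unit vectors `a` and `b` is the length of the component of `b`
orthogonal to `a`. Splitting `w = ⟪v, w⟫ • v + w'` with `w' ⊥ v` and projecting both pieces
orthogonally to `u` gives lengths at most `|⟪v, w⟫| · sin(u, v) ≤ sin(u, v)` and
`‖w'‖ = sin(v, w)`; the triangle inequality for the norm concludes.
-/

open scoped InnerProductSpace
open Submodule

namespace InnerProductGeometry

variable {𝕜 E : Type*} [RCLike 𝕜] [NormedAddCommGroup E] [InnerProductSpace 𝕜 E]

theorem norm_starProjection_orthogonal_singleton_sq {a : E} (ha : ‖a‖ = 1) (x : E) :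
    ‖(𝕜 ∙ a)ᗮ.starProjection x‖ ^ 2 = ‖x‖ ^ 2 - ‖⟪a, x⟫_𝕜‖ ^ 2 := by
  rw [norm_sq_eq_add_norm_sq_starProjection x (𝕜 ∙ a), starProjection_unit_singleton 𝕜 ha,
    norm_smul, ha, mul_one]
  ring

theorem sqrt_one_sub_norm_inner_sq_eq_norm_starProjection {a b : E} (ha : ‖a‖ = 1)
    (hb : ‖b‖ = 1) :
    √(1 - ‖⟪a, b⟫_𝕜‖ ^ 2) = ‖(𝕜 ∙ a)ᗮ.starProjection b‖ := by
  rw [← one_pow 2, ← hb, ← norm_starProjection_orthogonal_singleton_sq ha,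
    Real.sqrt_sq (norm_nonneg _)]

theorem norm_starProjection_orthogonal_singleton_le (u : E) {v : E} (hv : ‖v‖ = 1) (w : E) :
    ‖(𝕜 ∙ u)ᗮ.starProjection w‖ ≤
      ‖⟪v, w⟫_𝕜‖ * ‖(𝕜 ∙ u)ᗮ.starProjection v‖ + ‖(𝕜 ∙ v)ᗮ.starProjection w‖ := by
  set P := (𝕜 ∙ u)ᗮ.starProjection
  have hsplit : w = ⟪v, w⟫_𝕜 • v + (𝕜 ∙ v)ᗮ.starProjection w := by
    rw [← starProjection_unit_singleton 𝕜 hv, starProjection_add_starProjection_orthogonal]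
  calc ‖P w‖ = ‖⟪v, w⟫_𝕜 • P v + P ((𝕜 ∙ v)ᗮ.starProjection w)‖ := by
        conv_lhs => rw [hsplit, map_add, map_smul]
    _ ≤ ‖⟪v, w⟫_𝕜‖ * ‖P v‖ + ‖P ((𝕜 ∙ v)ᗮ.starProjection w)‖ := by
        rw [← norm_smul]; exact norm_add_le _ _
    _ ≤ ‖⟪v, w⟫_𝕜‖ * ‖P v‖ + ‖(𝕜 ∙ v)ᗮ.starProjection w‖ := by
        gcongr; exact norm_starProjection_apply_le _ _

end InnerProductGeometry

open InnerProductGeometry in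
/-- Complex version of the spherical triangle inequality for sines: for three
unit vectors `u, v, w` in a complex inner product space, with the sine of the
inter-angle of unit vectors `a, b` being `√(1 - |⟪a,b⟫|²)`, the sum of two of
the sines dominates the third. -/
theorem sineTriangleComplex {E : Type*} [NormedAddCommGroup E] [InnerProductSpace ℂ E]
    (u v w : E) (hu : ‖u‖ = 1) (hv : ‖v‖ = 1) (hw : ‖w‖ = 1) :
    Real.sqrt (1 - ‖(inner ℂ u v : ℂ)‖ ^ 2) +
      Real.sqrt (1 - ‖(inner ℂ v w : ℂ)‖ ^ 2) ≥
      Real.sqrt (1 - ‖(inner ℂ u w : ℂ)‖ ^ 2) := by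
  rw [sqrt_one_sub_norm_inner_sq_eq_norm_starProjection hu hv,
    sqrt_one_sub_norm_inner_sq_eq_norm_starProjection hv hw,
    sqrt_one_sub_norm_inner_sq_eq_norm_starProjection hu hw]
  have hvw : ‖⟪v, w⟫_ℂ‖ ≤ 1 := by simpa [hv, hw] using norm_inner_le_norm (𝕜 := ℂ) v w
  calc ‖(ℂ ∙ u)ᗮ.starProjection w‖
      ≤ ‖⟪v, w⟫_ℂ‖ * ‖(ℂ ∙ u)ᗮ.starProjection v‖ + ‖(ℂ ∙ v)ᗮ.starProjection w‖ :=
        norm_starProjection_orthogonal_singleton_le u hv w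
    _ ≤ ‖(ℂ ∙ u)ᗮ.starProjection v‖ + ‖(ℂ ∙ v)ᗮ.starProjection w‖ := by
        gcongr; exact mul_le_of_le_one_left (norm_nonneg _) hvw
end

section
/- Let v_0, v_1, …, v_T be unit vectors in a complex inner product space. Then √(1 − |⟨v_0, v_T⟩|²) ≤ ∑_{t=1}^{T} √(1 − |⟨v_{t−1}, v_t⟩|²). -/
/-!
For a unit vector `b`, the sine `√(1 - |⟪a, b⟫|²)` is the distance from `a` to the line `𝕜 b`,
attained at `⟪b, a⟫ b`. If `a` is close to `μ b` and `b` is close to `ν c`, then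
`a - μ ν c = (a - μ b) + μ (b - ν c)` with `|μ| ≤ 1`, so sines satisfy the triangle inequality,
which is then chained along `v 0, …, v T`.
-/

noncomputable def sinAngle (𝕜 : Type*) {E : Type*} [RCLike 𝕜] [NormedAddCommGroup E]
    [InnerProductSpace 𝕜 E] (a b : E) : ℝ :=
  √(1 - ‖(inner 𝕜 a b : 𝕜)‖ ^ 2)

section

variable {𝕜 E : Type*} [RCLike 𝕜] [NormedAddCommGroup E] [InnerProductSpace 𝕜 E]
  {a b c : E}

local notation "⟪" x ", " y "⟫" => inner 𝕜 x y

theorem norm_sub_smul_sq_of_norm_eq_one_s5 (hb : ‖b‖ = 1) (a : E) (μ : 𝕜) :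
    ‖a - μ • b‖ ^ 2 = ‖a - ⟪b, a⟫ • b‖ ^ 2 + ‖⟪b, a⟫ - μ‖ ^ 2 := by
  have hdecomp : a - μ • b = (a - ⟪b, a⟫ • b) + (⟪b, a⟫ - μ) • b := by
    rw [sub_smul]; abel
  have horth : ⟪a - ⟪b, a⟫ • b, (⟪b, a⟫ - μ) • b⟫ = 0 := by
    rw [inner_smul_right, inner_sub_left, inner_smul_left, inner_self_eq_one_of_norm_eq_one hb,
      inner_conj_symm, mul_one, sub_self, mul_zero]
  simp only [sq, hdecomp, norm_add_sq_eq_norm_sq_add_norm_sq_of_inner_eq_zero _ _ horth,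
    norm_smul, hb, mul_one]

theorem norm_sub_inner_smul_le (hb : ‖b‖ = 1) (a : E) (μ : 𝕜) :
    ‖a - ⟪b, a⟫ • b‖ ≤ ‖a - μ • b‖ := by
  refine le_of_sq_le_sq ?_ (norm_nonneg _)
  rw [norm_sub_smul_sq_of_norm_eq_one_s5 hb a μ]
  exact le_add_of_nonneg_right (sq_nonneg _)

theorem sinAngle_eq_norm_sub_inner_smul (ha : ‖a‖ = 1) (hb : ‖b‖ = 1) :
    sinAngle 𝕜 a b = ‖a - ⟪b, a⟫ • b‖ := by
  have h := norm_sub_smul_sq_of_norm_eq_one_s5 hb a (0 : 𝕜)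
  rw [zero_smul, sub_zero, sub_zero, ha, one_pow] at h
  rw [sinAngle, ← norm_inner_symm, h, add_sub_cancel_right, Real.sqrt_sq (norm_nonneg _)]

theorem sinAngle_le_add (ha : ‖a‖ = 1) (hb : ‖b‖ = 1) (hc : ‖c‖ = 1) :
    sinAngle 𝕜 a c ≤ sinAngle 𝕜 a b + sinAngle 𝕜 b c := by
  set μ := ⟪b, a⟫
  set ν := ⟪c, b⟫
  have hμ : ‖μ‖ ≤ 1 := by simpa [ha, hb] using norm_inner_le_norm (𝕜 := 𝕜) b a
  rw [sinAngle_eq_norm_sub_inner_smul ha hc, sinAngle_eq_norm_sub_inner_smul ha hb,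
    sinAngle_eq_norm_sub_inner_smul hb hc]
  calc ‖a - ⟪c, a⟫ • c‖ ≤ ‖a - (μ * ν) • c‖ := norm_sub_inner_smul_le hc a _
    _ = ‖(a - μ • b) + μ • (b - ν • c)‖ := by rw [smul_sub, mul_smul]; abel_nf
    _ ≤ ‖a - μ • b‖ + ‖μ‖ * ‖b - ν • c‖ := (norm_add_le _ _).trans_eq (by rw [norm_smul])
    _ ≤ ‖a - μ • b‖ + ‖b - ν • c‖ := by gcongr; exact mul_le_of_le_one_left (norm_nonneg _) hμ

end

/-- Chained triangle inequality for sines of inter-angles: for unit vectors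
`v 0, …, v T` in a complex inner product space, the sine of the inter-angle
between the first and last vector is at most the sum of the sines of the
inter-angles between consecutive vectors. -/
theorem sineChain {E : Type*} [NormedAddCommGroup E] [InnerProductSpace ℂ E]
    (T : ℕ) (v : Fin (T + 1) → E) (hv : ∀ t, ‖v t‖ = 1) :
    Real.sqrt (1 - ‖(inner ℂ (v 0) (v (Fin.last T)) : ℂ)‖ ^ 2) ≤
      ∑ t : Fin T,
        Real.sqrt (1 - ‖(inner ℂ (v t.castSucc) (v t.succ) : ℂ)‖ ^ 2) := by
  change sinAngle ℂ (v 0) (v (Fin.last T)) ≤ ∑ t : Fin T, sinAngle ℂ (v t.castSucc) (v t.succ)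
  induction T with
  | zero => simp [sinAngle, hv 0]
  | succ T ih =>
    calc sinAngle ℂ (v 0) (v (Fin.last (T + 1)))
        ≤ sinAngle ℂ (v 0) (v (Fin.last T).castSucc)
          + sinAngle ℂ (v (Fin.last T).castSucc) (v (Fin.last (T + 1))) :=
          sinAngle_le_add (hv _) (hv _) (hv _)
      _ ≤ _ := by
        rw [Fin.sum_univ_castSucc, ← Fin.succ_last]
        gcongr
        exact ih (fun t => v t.castSucc) (fun t => hv _)
end

section
/- Let N be a positive integer, let ψ be a unit vector in a complex inner product space E, let (φ_x)_{x ∈ Fin N} be unit vectors in E, and let (C_x)_{x ∈ Fin N} be an orthonormal family in E. Define p = N^{−1} ∑_x |⟨φ_x, C_x⟩|² and F = ∑_x (1 − |⟨ψ, φ_x⟩|²). Then √(N·F) + N·√(1 − p) ≥ N − 1. -/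
/-!
Write `s(u, v) = √(1 - |⟨u, v⟩|²)` for the sine of the angle between the lines through unit
vectors `u` and `v`. Bessel's inequality for the orthonormal family `C` gives
`N - 1 ≤ ∑ₓ (1 - |⟨ψ, Cₓ⟩|²) ≤ ∑ₓ s(ψ, Cₓ)`. The sine distance satisfies the triangle inequality
`s(ψ, Cₓ) ≤ s(ψ, φₓ) + s(φₓ, Cₓ)`: removing the components along `v` from `u` and `w` shows
`|⟨u, w⟩| ≥ |⟨u, v⟩||⟨v, w⟩| - s(u, v) s(v, w)`, i.e. `cos γ ≥ cos (α + β)`. Finally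
Cauchy–Schwarz bounds the two sums of sines by `√(N F)` and `√(N · N (1 - p))`.
-/

open scoped InnerProductSpace

theorem Real.sum_sqrt_le_sqrt_card_mul_sum {ι : Type*} (s : Finset ι) {f : ι → ℝ}
    (hf : ∀ i, 0 ≤ f i) : ∑ i ∈ s, √(f i) ≤ √(s.card * ∑ i ∈ s, f i) := by
  simpa [mul_comm, Real.sqrt_mul (Nat.cast_nonneg _)] using
    Real.sum_sqrt_mul_sqrt_le s hf (fun _ ↦ zero_le_one)

theorem Real.sqrt_one_sub_sq_le_add {a b c : ℝ} (ha₀ : 0 ≤ a) (ha₁ : a ≤ 1) (hb₀ : 0 ≤ b)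
    (hb₁ : b ≤ 1) (hc : 0 ≤ c) (h : a * b - √(1 - a ^ 2) * √(1 - b ^ 2) ≤ c) :
    √(1 - c ^ 2) ≤ √(1 - a ^ 2) + √(1 - b ^ 2) := by
  set sa := √(1 - a ^ 2)
  set sb := √(1 - b ^ 2)
  have hsa : sa ^ 2 = 1 - a ^ 2 := Real.sq_sqrt (by nlinarith)
  have hsb : sb ^ 2 = 1 - b ^ 2 := Real.sq_sqrt (by nlinarith)
  have hsa₀ : 0 ≤ sa := Real.sqrt_nonneg _
  have hsb₀ : 0 ≤ sb := Real.sqrt_nonneg _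
  refine Real.sqrt_le_iff.mpr ⟨by positivity, ?_⟩
  rcases le_or_gt (a * b) (sa * sb) with hab | hab
  · nlinarith [sq_nonneg (a - b), sq_nonneg c]
  · -- `1 - (a b - sa sb)² = (sa b + a sb)²` is the sine addition formula
    have hsin : 1 - (a * b - sa * sb) ^ 2 = (sa * b + a * sb) ^ 2 := by
      linear_combination (-1 - sb ^ 2 + 1 - b ^ 2) * hsa - hsb
    have : (a * b - sa * sb) ^ 2 ≤ c ^ 2 := by nlinarith
    nlinarith [mul_nonneg (mul_nonneg hsa₀ hsb₀) (by nlinarith : (0:ℝ) ≤ 1 - a * b)]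

section InnerProductSpace

variable {𝕜 E : Type*} [RCLike 𝕜] [NormedAddCommGroup E] [InnerProductSpace 𝕜 E]

theorem norm_inner_le_one {u v : E} (hu : ‖u‖ = 1) (hv : ‖v‖ = 1) : ‖⟪u, v⟫_𝕜‖ ≤ 1 := by
  simpa [hu, hv] using norm_inner_le_norm (𝕜 := 𝕜) u v

theorem one_sub_norm_inner_sq_nonneg {u v : E} (hu : ‖u‖ = 1) (hv : ‖v‖ = 1) :
    0 ≤ 1 - ‖⟪u, v⟫_𝕜‖ ^ 2 := by
  nlinarith [norm_inner_le_one (𝕜 := 𝕜) hu hv, norm_nonneg ⟪u, v⟫_𝕜]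

theorem norm_sub_inner_smul_sq (u : E) {v : E} (hv : ‖v‖ = 1) :
    ‖u - ⟪v, u⟫_𝕜 • v‖ ^ 2 = ‖u‖ ^ 2 - ‖⟪v, u⟫_𝕜‖ ^ 2 := by
  rw [@norm_sub_sq 𝕜, inner_smul_right, ← inner_conj_symm u v, RCLike.mul_conj, norm_smul, hv]
  norm_cast
  ring

theorem inner_sub_inner_smul_sub_inner_smul (u w : E) {v : E} (hv : ‖v‖ = 1) :
    ⟪u - ⟪v, u⟫_𝕜 • v, w - ⟪v, w⟫_𝕜 • v⟫_𝕜 = ⟪u, w⟫_𝕜 - ⟪u, v⟫_𝕜 * ⟪v, w⟫_𝕜 := by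
  have hvv : ⟪v, v⟫_𝕜 = 1 := by rw [inner_self_eq_norm_sq_to_K, hv]; simp
  simp only [inner_sub_left, inner_sub_right, inner_smul_left, inner_smul_right, hvv,
    inner_conj_symm]
  ring

theorem sqrt_one_sub_norm_inner_sq_le_add {u v w : E} (hu : ‖u‖ = 1) (hv : ‖v‖ = 1)
    (hw : ‖w‖ = 1) :
    √(1 - ‖⟪u, w⟫_𝕜‖ ^ 2) ≤ √(1 - ‖⟪u, v⟫_𝕜‖ ^ 2) + √(1 - ‖⟪v, w⟫_𝕜‖ ^ 2) := by
  have hu' : ‖u - ⟪v, u⟫_𝕜 • v‖ = √(1 - ‖⟪u, v⟫_𝕜‖ ^ 2) := by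
    rw [← Real.sqrt_sq (norm_nonneg (u - _)), norm_sub_inner_smul_sq u hv, hu, one_pow,
      norm_inner_symm]
  have hw' : ‖w - ⟪v, w⟫_𝕜 • v‖ = √(1 - ‖⟪v, w⟫_𝕜‖ ^ 2) := by
    rw [← Real.sqrt_sq (norm_nonneg (w - _)), norm_sub_inner_smul_sq w hv, hw, one_pow]
  have hcos : ‖⟪u, v⟫_𝕜‖ * ‖⟪v, w⟫_𝕜‖ - √(1 - ‖⟪u, v⟫_𝕜‖ ^ 2) * √(1 - ‖⟪v, w⟫_𝕜‖ ^ 2)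
      ≤ ‖⟪u, w⟫_𝕜‖ := by
    have := norm_inner_le_norm (𝕜 := 𝕜) (u - ⟪v, u⟫_𝕜 • v) (w - ⟪v, w⟫_𝕜 • v)
    rw [inner_sub_inner_smul_sub_inner_smul u w hv, hu', hw'] at this
    have := norm_sub_norm_le (⟪u, v⟫_𝕜 * ⟪v, w⟫_𝕜) ⟪u, w⟫_𝕜
    rw [norm_mul, norm_sub_rev] at this
    linarith
  exact Real.sqrt_one_sub_sq_le_add (norm_nonneg _) (norm_inner_le_one hu hv) (norm_nonneg _)
    (norm_inner_le_one hv hw) (norm_nonneg _) hcos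

theorem Orthonormal.card_sub_norm_sq_le_sum_one_sub_norm_inner_sq {ι : Type*} {C : ι → E}
    (hC : Orthonormal 𝕜 C) (s : Finset ι) (x : E) :
    (s.card : ℝ) - ‖x‖ ^ 2 ≤ ∑ i ∈ s, (1 - ‖⟪x, C i⟫_𝕜‖ ^ 2) := by
  have := hC.sum_inner_products_le (s := s) x
  simp only [Finset.sum_sub_distrib, Finset.sum_const, nsmul_one, norm_inner_symm] at this ⊢
  linarith

end InnerProductSpace

open Finset in
/-- The final step of the proof of Theorem 1: with `ψ` a unit vector, `φ x`
unit vectors, `C x` an orthonormal family, average success probability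
`p = N⁻¹ ∑_x |⟨φ x, C x⟩|²` and `F = ∑_x (1 - |⟨ψ, φ x⟩|²)`, one has
`√(N·F) + N·√(1 - p) ≥ N - 1`. -/
theorem groverFinalStep {E : Type*} [NormedAddCommGroup E] [InnerProductSpace ℂ E]
    (N : ℕ) (hN : 0 < N)
    (ψ : E) (hψ : ‖ψ‖ = 1)
    (φ : Fin N → E) (hφ : ∀ x, ‖φ x‖ = 1)
    (C : Fin N → E) (hC : Orthonormal ℂ C)
    (p F : ℝ)
    (hp : p = (N : ℝ)⁻¹ * ∑ x : Fin N, ‖(inner ℂ (φ x) (C x) : ℂ)‖ ^ 2)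
    (hF : F = ∑ x : Fin N, (1 - ‖(inner ℂ ψ (φ x) : ℂ)‖ ^ 2)) :
    Real.sqrt ((N : ℝ) * F) + (N : ℝ) * Real.sqrt (1 - p) ≥ (N : ℝ) - 1 := by
  have hp' : ∑ x, (1 - ‖⟪φ x, C x⟫_ℂ‖ ^ 2) = N * (1 - p) := by
    rw [hp, mul_sub, mul_one, ← mul_assoc, mul_inv_cancel₀ (by positivity), one_mul,
      sum_sub_distrib, sum_const, card_univ, Fintype.card_fin, nsmul_one]
  calc (N : ℝ) - 1
      ≤ ∑ x, (1 - ‖⟪ψ, C x⟫_ℂ‖ ^ 2) := by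
        simpa [hψ] using hC.card_sub_norm_sq_le_sum_one_sub_norm_inner_sq univ ψ
    _ ≤ ∑ x, √(1 - ‖⟪ψ, C x⟫_ℂ‖ ^ 2) :=
        sum_le_sum fun x _ ↦ Real.le_sqrt_self_iff.mpr (sub_le_self _ (sq_nonneg _))
    _ ≤ ∑ x, √(1 - ‖⟪ψ, φ x⟫_ℂ‖ ^ 2) + ∑ x, √(1 - ‖⟪φ x, C x⟫_ℂ‖ ^ 2) := by
        rw [← sum_add_distrib]
        exact sum_le_sum fun x _ ↦ sqrt_one_sub_norm_inner_sq_le_add hψ (hφ x) (hC.1 x)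
    _ ≤ √(N * F) + √(N * (N * (1 - p))) := by
        rw [hF, ← hp']
        have sum_sqrt_le (u v : Fin N → E) (hu : ∀ x, ‖u x‖ = 1) (hv : ∀ x, ‖v x‖ = 1) :
            ∑ x, √(1 - ‖⟪u x, v x⟫_ℂ‖ ^ 2) ≤ √(N * ∑ x, (1 - ‖⟪u x, v x⟫_ℂ‖ ^ 2)) := by
          simpa using Real.sum_sqrt_le_sqrt_card_mul_sum univ fun x ↦
            one_sub_norm_inner_sq_nonneg (𝕜 := ℂ) (hu x) (hv x)
        exact add_le_add (sum_sqrt_le _ _ (fun _ ↦ hψ) hφ) (sum_sqrt_le _ _ hφ (hC.1 ·))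
    _ = √(N * F) + N * √(1 - p) := by
        rw [← mul_assoc, Real.sqrt_mul (mul_self_nonneg _), Real.sqrt_mul_self N.cast_nonneg]
end

section
/- (Oracle-model bound on the drift caused by oracle calls.) Let M, N, T be positive integers and k : Fin T → ℕ. Let ψ₀ be a unit vector in EuclideanSpace ℂ (Fin M), let U_1, …, U_T be unitary operators on EuclideanSpace ℂ (Fin M), and for each x ∈ Fin N and t ∈ Fin T let S_{x,t} ⊆ Fin M be such that every z ∈ Fin M belongs to S_{x,t} for at most k_t values of x. Let P_{x,t} be the sign-flip operator of S_{x,t}. Define the oracle-free state ψ_free = U_T ⋯ U_1 ψ₀ and, for each x, the oracle state ψ_x = U_T P_{x,T} ⋯ U_1 P_{x,1} ψ₀. Then ∑_{x ∈ Fin N} (1 − |⟨ψ_free, ψ_x⟩|²) ≤ 4 (∑_{t=1}^{T} √(k_t))². -/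
/-!
Hybrid argument. Let `φ t` be the oracle-free state just before step `t`. Running the oracle
evolution and the free one side by side, the unitaries do not increase distances, so
`‖ψ x - ψfree‖ ≤ ∑ₜ ‖P x t (φ t) - φ t‖`. A sign flip moves `φ t` by twice the amplitude it
has on `S x t`, and each `z` lies in at most `k t` of these sets, so
`∑ₓ ‖P x t (φ t) - φ t‖² ≤ 4 k t`. Minkowski's inequality in `ℓ²(x)` then bounds
`∑ₓ ‖ψ x - ψfree‖²` by `(∑ₜ √(4 k t))²`, and for unit vectors
`1 - |⟨ψfree, ψ x⟩|² ≤ ‖ψ x - ψfree‖²`.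
-/

open Finset

theorem one_sub_norm_inner_sq_le_norm_sub_sq {𝕜 E : Type*} [RCLike 𝕜] [NormedAddCommGroup E]
    [InnerProductSpace 𝕜 E] {u v : E} (hu : ‖u‖ = 1) (hv : ‖v‖ = 1) :
    1 - ‖(inner 𝕜 u v : 𝕜)‖ ^ 2 ≤ ‖v - u‖ ^ 2 := by
  have hre : RCLike.re (inner 𝕜 v u : 𝕜) ≤ ‖(inner 𝕜 u v : 𝕜)‖ := by
    rw [← norm_inner_symm]; exact RCLike.re_le_norm _
  rw [@norm_sub_sq 𝕜, hu, hv]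
  nlinarith [sq_nonneg (1 - ‖(inner 𝕜 u v : 𝕜)‖)]

/-- Minkowski's inequality in `ℓ²(ι)`. -/
theorem sum_sq_sum_le_sq_sum_sqrt {ι κ : Type*} [Fintype ι] (s : Finset κ)
    (a : κ → ι → ℝ) :
    ∑ i, (∑ t ∈ s, a t i) ^ 2 ≤ (∑ t ∈ s, √(∑ i, a t i ^ 2)) ^ 2 := by
  have hnorm (b : ι → ℝ) : ‖WithLp.toLp 2 b‖ = √(∑ i, b i ^ 2) := by
    simp [EuclideanSpace.norm_eq]
  have minkowski := norm_sum_le s fun t => WithLp.toLp 2 (a t)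
  rw [← WithLp.toLp_sum, hnorm] at minkowski
  simp only [hnorm, Finset.sum_apply] at minkowski
  calc _ = √(∑ i, (∑ t ∈ s, a t i) ^ 2) ^ 2 := (Real.sq_sqrt (by positivity)).symm
    _ ≤ _ := by gcongr

theorem sum_sum_le_mul_sum_of_card_le {ι α R : Type*} [Fintype ι] [Fintype α] [DecidableEq α]
    [CommSemiring R] [PartialOrder R] [IsOrderedRing R] (S : ι → Finset α) (k : ℕ)
    (hk : ∀ z, #{x | z ∈ S x} ≤ k) (w : α → R) (hw : ∀ z, 0 ≤ w z) :
    ∑ x, ∑ z ∈ S x, w z ≤ k * ∑ z, w z := by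
  calc ∑ x, ∑ z ∈ S x, w z = ∑ z, ∑ x with z ∈ S x, w z :=
        sum_comm' fun x z => by simp
    _ = ∑ z, #{x | z ∈ S x} * w z := by simp only [sum_const, nsmul_eq_mul]
    _ ≤ ∑ z, k * w z := by gcongr with z; exacts [hw z, hk z]
    _ = k * ∑ z, w z := (mul_sum ..).symm

section SignFlip

variable {𝕜 ι : Type*} [RCLike 𝕜] [Fintype ι] [DecidableEq ι] {φ : EuclideanSpace 𝕜 ι}

theorem norm_signFlip {S : Finset ι} {ψ : EuclideanSpace 𝕜 ι}
    (h : ∀ z, ψ z = if z ∈ S then -φ z else φ z) : ‖ψ‖ = ‖φ‖ := by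
  simp only [EuclideanSpace.norm_eq, h, apply_ite norm, norm_neg, ite_self]

theorem norm_signFlip_sub_sq {S : Finset ι} {ψ : EuclideanSpace 𝕜 ι}
    (h : ∀ z, ψ z = if z ∈ S then -φ z else φ z) :
    ‖ψ - φ‖ ^ 2 = 4 * ∑ z ∈ S, ‖φ z‖ ^ 2 := by
  have hz (z : ι) : ‖(ψ - φ) z‖ ^ 2 = if z ∈ S then 4 * ‖φ z‖ ^ 2 else 0 := by
    rw [PiLp.sub_apply, h]
    split_ifs
    · rw [← neg_add', norm_neg, ← two_mul, norm_mul, RCLike.norm_two]; ring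
    · simp
  rw [EuclideanSpace.norm_sq_eq, mul_sum, sum_congr rfl fun z _ => hz z,
    sum_ite_mem, univ_inter]

theorem sum_norm_signFlip_sub_sq_le {N : Type*} [Fintype N] (S : N → Finset ι) (k : ℕ)
    (hk : ∀ z, #{x | z ∈ S x} ≤ k) (ψ : N → EuclideanSpace 𝕜 ι)
    (h : ∀ x z, ψ x z = if z ∈ S x then -φ z else φ z) :
    ∑ x, ‖ψ x - φ‖ ^ 2 ≤ 4 * k * ‖φ‖ ^ 2 := by
  simp only [norm_signFlip_sub_sq (h _), ← mul_sum, EuclideanSpace.norm_sq_eq, mul_assoc]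
  gcongr
  exact sum_sum_le_mul_sum_of_card_le S k hk _ fun z => by positivity

end SignFlip

section Evolution

variable {X : Type*}

theorem LipschitzWith.foldl_apply [PseudoEMetricSpace X] (L : List (X → X))
    (hL : ∀ h ∈ L, LipschitzWith 1 h) :
    LipschitzWith 1 fun v => L.foldl (fun v h => h v) v := by
  induction L with
  | nil => exact LipschitzWith.id
  | cons h L ih =>
    simpa [Function.comp_def] using
      (ih fun h' hh' => hL h' (List.mem_cons_of_mem h hh')).comp (hL h List.mem_cons_self)

theorem norm_foldl_apply [Norm X] (L : List (X → X)) (hL : ∀ h ∈ L, ∀ v, ‖h v‖ = ‖v‖)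
    (v : X) : ‖L.foldl (fun v h => h v) v‖ = ‖v‖ := by
  induction L generalizing v with
  | nil => rfl
  | cons h L ih =>
    rw [List.foldl_cons, ih (fun h' hh' => hL h' (List.mem_cons_of_mem h hh')),
      hL h List.mem_cons_self]

theorem dist_foldl_ofFn_le [PseudoMetricSpace X] {n : ℕ} (f g : Fin n → X → X)
    (hg : ∀ t, LipschitzWith 1 (g t)) (v : X) :
    dist ((List.ofFn g).foldl (fun v h => h v) v) ((List.ofFn f).foldl (fun v h => h v) v) ≤
      ∑ t, dist (g t (((List.ofFn f).take t).foldl (fun v h => h v) v))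
        (f t (((List.ofFn f).take t).foldl (fun v h => h v) v)) := by
  induction n generalizing v with
  | zero => simp
  | succ n ih =>
    set gs := List.ofFn fun t => g t.succ
    have hgs : LipschitzWith 1 fun v => gs.foldl (fun v h => h v) v :=
      LipschitzWith.foldl_apply _ (by simp [gs, List.mem_ofFn, hg])
    simp only [List.ofFn_succ, List.foldl_cons, Fin.sum_univ_succ, Fin.val_zero, List.take_zero,
      List.foldl_nil, Fin.val_succ, List.take_succ_cons]
    calc _ ≤ dist (gs.foldl (fun v h => h v) (g 0 v)) (gs.foldl (fun v h => h v) (f 0 v)) +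
            dist (gs.foldl (fun v h => h v) (f 0 v))
              ((List.ofFn fun t => f t.succ).foldl (fun v h => h v) (f 0 v)) :=
          dist_triangle _ _ _
      _ ≤ _ := by
          gcongr
          · simpa using hgs.dist_le_mul (g 0 v) (f 0 v)
          · exact ih _ _ (fun t => hg t.succ) _

end Evolution

theorem oracleDriftBound_general (M N T : ℕ)
    (k : Fin T → ℕ)
    (ψ₀ : EuclideanSpace ℂ (Fin M)) (hψ₀ : ‖ψ₀‖ = 1)
    (U : Fin T → (EuclideanSpace ℂ (Fin M) ≃ₗᵢ[ℂ] EuclideanSpace ℂ (Fin M)))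
    (S : Fin N → Fin T → Finset (Fin M))
    (hk : ∀ (t : Fin T) (z : Fin M),
      (Finset.univ.filter fun x : Fin N => z ∈ S x t).card ≤ k t)
    (P : Fin N → Fin T → (EuclideanSpace ℂ (Fin M) →ₗ[ℂ] EuclideanSpace ℂ (Fin M)))
    (hP : ∀ (x : Fin N) (t : Fin T) (φ : EuclideanSpace ℂ (Fin M)) (z : Fin M),
      P x t φ z = if z ∈ S x t then -φ z else φ z)
    (ψfree : EuclideanSpace ℂ (Fin M))
    (hfree : ψfree = (List.ofFn fun t : Fin T =>
        fun v : EuclideanSpace ℂ (Fin M) => U t v).foldl (fun v f => f v) ψ₀)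
    (ψ : Fin N → EuclideanSpace ℂ (Fin M))
    (hψ : ∀ x, ψ x = (List.ofFn fun t : Fin T =>
        fun v : EuclideanSpace ℂ (Fin M) => U t (P x t v)).foldl (fun v f => f v) ψ₀) :
    ∑ x : Fin N, (1 - ‖(inner ℂ ψfree (ψ x) : ℂ)‖ ^ 2) ≤
      4 * (∑ t : Fin T, Real.sqrt (k t)) ^ 2 := by
  set φ : Fin T → EuclideanSpace ℂ (Fin M) := fun t =>
    ((List.ofFn fun t : Fin T => fun v => U t v).take t).foldl (fun v f => f v) ψ₀
  have hPnorm x t v : ‖P x t v‖ = ‖v‖ := norm_signFlip (hP x t v)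
  have hfree_norm : ‖ψfree‖ = 1 := by
    rw [hfree, norm_foldl_apply _ (by simp [List.mem_ofFn]), hψ₀]
  have hψ_norm x : ‖ψ x‖ = 1 := by
    rw [hψ, norm_foldl_apply _ (by simp [List.mem_ofFn, hPnorm]), hψ₀]
  have hφ_norm t : ‖φ t‖ = 1 := by
    rw [norm_foldl_apply _ (fun h hh => by
      obtain ⟨s, rfl⟩ := List.mem_ofFn.mp (List.mem_of_mem_take hh); simp), hψ₀]
  have hdrift x : ‖ψ x - ψfree‖ ≤ ∑ t, ‖P x t (φ t) - φ t‖ := by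
    rw [hψ, hfree, ← dist_eq_norm]
    refine (dist_foldl_ofFn_le _ _ (fun t => ?_) ψ₀).trans_eq ?_
    · exact ((U t).isometry.comp
        (AddMonoidHomClass.isometry_of_norm (P x t) (hPnorm x t))).lipschitz
    · simp only [dist_eq_norm, ← map_sub, LinearIsometryEquiv.norm_map, φ]
  have hquery t : ∑ x, ‖P x t (φ t) - φ t‖ ^ 2 ≤ 4 * k t := by
    simpa [hφ_norm] using
      sum_norm_signFlip_sub_sq_le (S · t) (k t) (hk t) _ fun x => hP x t (φ t)
  calc ∑ x, (1 - ‖(inner ℂ ψfree (ψ x) : ℂ)‖ ^ 2)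
      ≤ ∑ x, ‖ψ x - ψfree‖ ^ 2 :=
        sum_le_sum fun x _ => one_sub_norm_inner_sq_le_norm_sub_sq hfree_norm (hψ_norm x)
    _ ≤ ∑ x, (∑ t, ‖P x t (φ t) - φ t‖) ^ 2 := by gcongr with x; exact hdrift x
    _ ≤ (∑ t, √(∑ x, ‖P x t (φ t) - φ t‖ ^ 2)) ^ 2 := sum_sq_sum_le_sq_sum_sqrt _ _
    _ ≤ (∑ t, √(4 * k t)) ^ 2 :=
        pow_le_pow_left₀ (sum_nonneg fun t _ => Real.sqrt_nonneg _)
          (sum_le_sum fun t _ => Real.sqrt_le_sqrt (hquery t)) 2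
    _ = 4 * (∑ t, √(k t)) ^ 2 := by
        simp only [Real.sqrt_mul zero_le_four, ← mul_sum, mul_pow]
        norm_num

/-- Oracle-model drift bound (inequalities (24)–(29) of the paper): comparing
the oracle-free evolution `ψfree = U_T ⋯ U_1 ψ₀` with the oracle evolutions
`ψ x = U_T P_{x,T} ⋯ U_1 P_{x,1} ψ₀`, where `P x t` is the sign-flip operator
of a set `S x t` and every `z` lies in `S x t` for at most `k t` values of `x`,
one has `∑_x (1 - |⟨ψfree, ψ x⟩|²) ≤ 4 (∑_t √(k t))²`. -/
theorem oracleDriftBound (M N T : ℕ) (hM : 0 < M) (hN : 0 < N) (hT : 0 < T)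
    (k : Fin T → ℕ)
    (ψ₀ : EuclideanSpace ℂ (Fin M)) (hψ₀ : ‖ψ₀‖ = 1)
    (U : Fin T → (EuclideanSpace ℂ (Fin M) ≃ₗᵢ[ℂ] EuclideanSpace ℂ (Fin M)))
    (S : Fin N → Fin T → Finset (Fin M))
    (hk : ∀ (t : Fin T) (z : Fin M),
      (Finset.univ.filter fun x : Fin N => z ∈ S x t).card ≤ k t)
    (P : Fin N → Fin T → (EuclideanSpace ℂ (Fin M) →ₗ[ℂ] EuclideanSpace ℂ (Fin M)))
    (hP : ∀ (x : Fin N) (t : Fin T) (φ : EuclideanSpace ℂ (Fin M)) (z : Fin M),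
      P x t φ z = if z ∈ S x t then -φ z else φ z)
    (ψfree : EuclideanSpace ℂ (Fin M))
    (hfree : ψfree = (List.ofFn fun t : Fin T =>
        fun v : EuclideanSpace ℂ (Fin M) => U t v).foldl (fun v f => f v) ψ₀)
    (ψ : Fin N → EuclideanSpace ℂ (Fin M))
    (hψ : ∀ x, ψ x = (List.ofFn fun t : Fin T =>
        fun v : EuclideanSpace ℂ (Fin M) => U t (P x t v)).foldl (fun v f => f v) ψ₀) :
    ∑ x : Fin N, (1 - ‖(inner ℂ ψfree (ψ x) : ℂ)‖ ^ 2) ≤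
      4 * (∑ t : Fin T, Real.sqrt (k t)) ^ 2 :=
  oracleDriftBound_general M N T k ψ₀ hψ₀ U S hk P hP ψfree hfree ψ hψ
end

section
/- Let n be a positive integer, let T be a permutation of the set (Fin n → ZMod 2) of n-bit strings, and let a ∈ (Fin n → ZMod 2) with a ≠ 0. Let H_n be the n-fold Hadamard matrix, with entries H_n(b, c) = 2^{−n/2}·(−1)^{⟨b,c⟩}, where ⟨b,c⟩ = ∑_i b(i)·c(i) computed in ZMod 2, and let P_T be the permutation matrix of T. Then the amplitude of the all-zeros string in the state obtained by applying H_n, then P_T, then H_n to the basis vector e_a is zero; that is, ((H_n * P_T * H_n) · e_a)(0) = 0. Hence a quantum-depth-2 circuit on input a ≠ 0 outputs 0 with probability 0. -/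
/-- Equation (18) of the paper: for a quantum-depth-2 circuit `H_n · P_T · H_n`
(global Hadamard, a permutation `T` of the computational basis of `n`-bit
strings, then another global Hadamard) applied to a basis state `e_a` with
`a ≠ 0`, the output amplitude on the all-zeros string is zero, so the outcome
`0` occurs with probability `0`. -/
theorem depthTwoZeroAmplitude (n : ℕ) (hn : 0 < n)
    (T : Equiv.Perm (Fin n → ZMod 2))
    (a : Fin n → ZMod 2) (ha : a ≠ 0)
    (H : Matrix (Fin n → ZMod 2) (Fin n → ZMod 2) ℂ)
    (hH : ∀ b c, H b c = ((Real.sqrt (2 ^ n) : ℝ) : ℂ)⁻¹ *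
      (if (∑ i, b i * c i : ZMod 2) = 1 then -1 else 1))
    (P : Matrix (Fin n → ZMod 2) (Fin n → ZMod 2) ℂ)
    (hP : ∀ b c, P b c = if b = T c then 1 else 0)
    (e : (Fin n → ZMod 2) → ℂ)
    (he : ∀ b, e b = if b = a then 1 else 0) :
    (H * P * H).mulVec e 0 = 0 := by
  classical
  obtain ⟨i, hi⟩ : ∃ i, a i ≠ 0 := by
    by_contra h; push_neg at h; exact ha (funext h)
  have hi1 : a i = 1 := (by decide : ∀ x : ZMod 2, x ≠ 0 → x = 1) _ hi
  -- character sum over the nontrivial character determined by `a`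
  have key : ∑ d : Fin n → ZMod 2,
      (if (∑ j, d j * a j : ZMod 2) = 1 then (-1 : ℂ) else 1) = 0 := by
    apply Finset.sum_ninvolution (fun d => d + (Pi.single i 1 : Fin n → ZMod 2))
    · intro d
      have hs : (∑ j, (d + (Pi.single i 1 : Fin n → ZMod 2)) j * a j : ZMod 2)
          = (∑ j, d j * a j) + 1 := by
        simp only [Pi.add_apply, add_mul, Finset.sum_add_distrib]
        congr 1
        rw [Fintype.sum_eq_single i (fun j hj => by
          simp [Pi.single_eq_of_ne hj])]
        simp [hi1]
      rw [hs]
      rcases (by decide : ∀ t : ZMod 2, t = 0 ∨ t = 1) (∑ j, d j * a j) with h | h <;>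
        simp [h]
    · intro d _
      intro hcon
      have : d i + 1 = d i := by
        have := congrFun hcon i
        simp at this
      simp at this
    · intro d; exact Finset.mem_univ _
    · intro d
      have : (Pi.single i 1 : Fin n → ZMod 2) + Pi.single i 1 = 0 := by
        rw [← Pi.single_add, (by decide : (1 : ZMod 2) + 1 = 0), Pi.single_zero]
      rw [add_assoc, this, add_zero]
  have hzero : ∀ c, H 0 c = ((Real.sqrt (2 ^ n) : ℝ) : ℂ)⁻¹ := by
    intro c
    rw [hH]
    simp
  have hcol : (H * P * H).mulVec e 0 = (H * P * H) 0 a := by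
    simp [Matrix.mulVec, dotProduct, he, mul_ite]
  rw [hcol]
  have : (H * P * H) 0 a = ((Real.sqrt (2 ^ n) : ℝ) : ℂ)⁻¹ *
      (((Real.sqrt (2 ^ n) : ℝ) : ℂ)⁻¹ *
        ∑ c : Fin n → ZMod 2, (if (∑ j, c j * a j : ZMod 2) = 1 then (-1 : ℂ) else 1)) := by
    simp only [Matrix.mul_apply, hP, mul_ite, mul_one, mul_zero, ite_mul, zero_mul,
      Finset.sum_ite_eq' , Finset.mem_univ, if_true]
    simp only [Finset.mul_sum]
    refine Finset.sum_congr rfl fun c _ => ?_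
    rw [hzero, hH]
  rw [this, key, mul_zero, mul_zero]
end

section
/- (Local Hadamard from global Hadamards.) Work in the 4-qubit state space ℂ^{Bool⁴} with qubits labelled a, b, c, d. Let Λ_{cd}(X_b) and Λ_{cd}(X_a) denote the generalised Toffoli gates that flip qubit b (respectively qubit a) exactly when qubits c and d are both 1, and let H⁴ denote the global Hadamard operator H ⊗ H ⊗ H ⊗ H. Then for all s, t ∈ {0,1}, the composite operator Λ_{cd}(X_b) ∘ H⁴ ∘ Λ_{cd}(X_a) ∘ H⁴ ∘ Λ_{cd}(X_b) maps the state |1⟩_a ⊗ |−⟩_b ⊗ |s⟩_c ⊗ |t⟩_d to |1⟩_a ⊗ |−⟩_b ⊗ (H|s⟩)_c ⊗ (H|t⟩)_d. In particular it maps |1,−,0,0⟩ ↦ |1,−,+,+⟩, |1,−,0,1⟩ ↦ |1,−,−,+⟩, |1,−,1,0⟩ ↦ |1,−,+,−⟩ and |1,−,1,1⟩ ↦ |1,−,−,−⟩. -/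
/-!
Write `sgn b = (-1)^b`. Since `sgn (b ⊕ e) = sgn b * sgn e`, a Toffoli gate whose target qubit
is in the state `|−⟩ ∝ sgn` only multiplies the state by the phase `sgn (x_c x_d)` (phase
kickback). Both `Λ_{cd}(X_b)` find their target in `|−⟩`, and so does `Λ_{cd}(X_a)`, because the
first `H⁴` turns `|1⟩_a|−⟩_b` into `|−⟩_a|1⟩_b` and the second turns it back. As `H⁴` maps
product states to product states, the circuit acts on the `cd` register as
`CZ (H ⊗ H) CZ (H ⊗ H) CZ`, and two explicit two-qubit transforms take `|s t⟩` to
`H|t⟩ ⊗ H|s⟩`.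
-/

namespace LocalHadamard

local notation "Q" => Bool × Bool × Bool × Bool
local notation "ℋ" => EuclideanSpace ℂ (Bool × Bool × Bool × Bool)

def sgn (b : Bool) : ℂ := if b then -1 else 1

def ket (s x : Bool) : ℂ := if x = s then 1 else 0

@[simp] lemma sgn_false : sgn false = 1 := rfl

@[simp] lemma sgn_true : sgn true = -1 := rfl

lemma sgn_xor (a b : Bool) : sgn (xor a b) = sgn a * sgn b := by
  cases a <;> cases b <;> simp

lemma sgn_mul_self (b : Bool) : sgn b * sgn b = 1 := by
  cases b <;> simp

def hadamard₁ (f : Bool → ℂ) (x : Bool) : ℂ := ∑ y, sgn (x && y) * f y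

def hadamard₂ (m : Bool → Bool → ℂ) (x z : Bool) : ℂ :=
  ∑ y, ∑ w, sgn (x && y) * sgn (z && w) * m y w

lemma hadamard₁_ket (s x : Bool) : hadamard₁ (ket s) x = sgn (x && s) := by
  cases s <;> simp [hadamard₁, ket]

lemma hadamard₁_sgn (x : Bool) : hadamard₁ sgn x = 2 * ket true x := by
  cases x <;> norm_num [hadamard₁, ket]

lemma hadamard₂_sgn_and_mul_ket (s t x z : Bool) :
    hadamard₂ (fun y w => sgn (y && w) * (ket s y * ket t w)) x z =
      sgn (x && z) * sgn (xor x t && xor z s) := by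
  cases s <;> cases t <;> cases x <;> cases z <;> norm_num [hadamard₂, ket]

lemma hadamard₂_sgn_xor_and_xor (s t x z : Bool) :
    hadamard₂ (fun y w => sgn (xor y t && xor w s)) x z =
      2 * (sgn (x && z) * (sgn (x && t) * sgn (z && s))) := by
  cases s <;> cases t <;> cases x <;> cases z <;> norm_num [hadamard₂]

theorem hadamard4_apply_of_eq_mul (H4 : ℋ →ₗ[ℂ] ℋ)
    (hH4 : ∀ (ψ : ℋ) (x : Q), H4 ψ x = (1 / 4 : ℂ) * ∑ y : Q,
        (if xor (x.1 && y.1) (xor (x.2.1 && y.2.1)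
            (xor (x.2.2.1 && y.2.2.1) (x.2.2.2 && y.2.2.2))) then -1 else 1) * ψ y)
    {ψ : ℋ} {A : ℂ} {f g : Bool → ℂ} {m : Bool → Bool → ℂ}
    (hψ : ∀ y, ψ y = A * (f y.1 * g y.2.1 * m y.2.2.1 y.2.2.2)) (x : Q) :
    H4 ψ x = A / 4 * (hadamard₁ f x.1 * hadamard₁ g x.2.1 * hadamard₂ m x.2.2.1 x.2.2.2) := by
  rw [hH4]
  simp only [← sgn.eq_def, sgn_xor, hψ, hadamard₁, hadamard₂, Fintype.sum_prod_type,
    Fintype.sum_bool]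
  ring

end LocalHadamard

open LocalHadamard in
/-- Equations (6)–(7) of the paper (local Hadamard from global Hadamards):
on the 4-qubit space with qubits `a, b, c, d`, the composite
`Λ_{cd}(X_b) ∘ H⁴ ∘ Λ_{cd}(X_a) ∘ H⁴ ∘ Λ_{cd}(X_b)` maps
`|1⟩_a ⊗ |−⟩_b ⊗ |s⟩_c ⊗ |t⟩_d` to `|1⟩_a ⊗ |−⟩_b ⊗ (H|t⟩)_c ⊗ (H|s⟩)_d`;
in particular `|1,−,0,0⟩ ↦ |1,−,+,+⟩`, `|1,−,0,1⟩ ↦ |1,−,−,+⟩`,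
`|1,−,1,0⟩ ↦ |1,−,+,−⟩` and `|1,−,1,1⟩ ↦ |1,−,−,−⟩`.
Here a 4-qubit basis label is `(x_a, x_b, x_c, x_d) : Bool × Bool × Bool × Bool`,
`Tb = Λ_{cd}(X_b)` XORs bit `b` with `x_c AND x_d`, `Ta = Λ_{cd}(X_a)` XORs bit
`a` with `x_c AND x_d`, and `H4 = H ⊗ H ⊗ H ⊗ H` has entries `2⁻²·(−1)^{x·y}`. -/
theorem localHadamardFromGlobal
    (Tb Ta H4 : EuclideanSpace ℂ (Bool × Bool × Bool × Bool) →ₗ[ℂ]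
      EuclideanSpace ℂ (Bool × Bool × Bool × Bool))
    (hTb : ∀ (ψ : EuclideanSpace ℂ (Bool × Bool × Bool × Bool))
      (x : Bool × Bool × Bool × Bool),
      Tb ψ x = ψ (x.1, xor x.2.1 (x.2.2.1 && x.2.2.2), x.2.2.1, x.2.2.2))
    (hTa : ∀ (ψ : EuclideanSpace ℂ (Bool × Bool × Bool × Bool))
      (x : Bool × Bool × Bool × Bool),
      Ta ψ x = ψ (xor x.1 (x.2.2.1 && x.2.2.2), x.2.1, x.2.2.1, x.2.2.2))
    (hH4 : ∀ (ψ : EuclideanSpace ℂ (Bool × Bool × Bool × Bool))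
      (x : Bool × Bool × Bool × Bool),
      H4 ψ x = (1 / 4 : ℂ) * ∑ y : Bool × Bool × Bool × Bool,
        (if xor (x.1 && y.1) (xor (x.2.1 && y.2.1)
            (xor (x.2.2.1 && y.2.2.1) (x.2.2.2 && y.2.2.2))) then -1 else 1) * ψ y)
    (s t : Bool)
    (ψin ψout : EuclideanSpace ℂ (Bool × Bool × Bool × Bool))
    -- `ψin = |1⟩_a ⊗ |−⟩_b ⊗ |s⟩_c ⊗ |t⟩_d`
    (hψin : ∀ x : Bool × Bool × Bool × Bool,
      ψin x = (if x.1 = true then 1 else 0) *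
        (((Real.sqrt 2 : ℝ) : ℂ)⁻¹ * (if x.2.1 then -1 else 1)) *
        (if x.2.2.1 = s then 1 else 0) * (if x.2.2.2 = t then 1 else 0))
    -- `ψout = |1⟩_a ⊗ |−⟩_b ⊗ (H|t⟩)_c ⊗ (H|s⟩)_d`
    (hψout : ∀ x : Bool × Bool × Bool × Bool,
      ψout x = (if x.1 = true then 1 else 0) *
        (((Real.sqrt 2 : ℝ) : ℂ)⁻¹ * (if x.2.1 then -1 else 1)) *
        (((Real.sqrt 2 : ℝ) : ℂ)⁻¹ * (if x.2.2.1 && t then -1 else 1)) *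
        (((Real.sqrt 2 : ℝ) : ℂ)⁻¹ * (if x.2.2.2 && s then -1 else 1))) :
    Tb (H4 (Ta (H4 (Tb ψin)))) = ψout := by
  set r : ℂ := ((Real.sqrt 2 : ℝ) : ℂ)⁻¹
  have hr : r * r = 1 / 2 := by
    rw [← mul_inv, ← Complex.ofReal_mul, Real.mul_self_sqrt zero_le_two]
    norm_num
  have h₁ : ∀ x, Tb ψin x = r * (ket true x.1 * sgn x.2.1 *
      (sgn (x.2.2.1 && x.2.2.2) * (ket s x.2.2.1 * ket t x.2.2.2))) := by
    rintro ⟨a, b, c, d⟩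
    rw [hTb, hψin]
    simp only [← sgn.eq_def, ← ket.eq_def, sgn_xor]
    ring
  have h₂ : ∀ x, H4 (Tb ψin) x = r / 2 * (sgn x.1 * ket true x.2.1 *
      (sgn (x.2.2.1 && x.2.2.2) * sgn (xor x.2.2.1 t && xor x.2.2.2 s))) := by
    intro x
    rw [hadamard4_apply_of_eq_mul H4 hH4
        (m := fun c d => sgn (c && d) * (ket s c * ket t d)) h₁,
      hadamard₁_ket, hadamard₁_sgn, hadamard₂_sgn_and_mul_ket, Bool.and_true]
    ring
  have h₃ : ∀ x, Ta (H4 (Tb ψin)) x =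
      r / 2 * (sgn x.1 * ket true x.2.1 * sgn (xor x.2.2.1 t && xor x.2.2.2 s)) := by
    rintro ⟨a, b, c, d⟩
    rw [hTa, h₂, sgn_xor]
    linear_combination
      r / 2 * sgn a * ket true b * sgn (xor c t && xor d s) * sgn_mul_self (c && d)
  have h₄ : ∀ x, H4 (Ta (H4 (Tb ψin))) x = r / 2 * (ket true x.1 * sgn x.2.1 *
      (sgn (x.2.2.1 && x.2.2.2) * (sgn (x.2.2.1 && t) * sgn (x.2.2.2 && s)))) := by
    intro x
    rw [hadamard4_apply_of_eq_mul H4 hH4 (m := fun c d => sgn (xor c t && xor d s)) h₃,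
      hadamard₁_ket, hadamard₁_sgn, hadamard₂_sgn_xor_and_xor, Bool.and_true]
    ring
  ext ⟨a, b, c, d⟩
  rw [hTb, h₄, hψout]
  simp only [← sgn.eq_def, ← ket.eq_def, sgn_xor]
  linear_combination r * ket true a * sgn b * sgn (c && t) * sgn (d && s) *
    (1 / 2 * sgn_mul_self (c && d) - hr)
end
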